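/- Let Φ_s : ℝ^d × ℝ^d → ℝ^d × ℝ^d be a flow (a one-parameter group of homeomorphisms) such that for every compact set K ⊂ ℝ^d × ℝ^d containing no stationary points of Φ, there exist constants α, β > 0 with α|s| − β ≤ ‖Φ_s(x,ξ)‖ ≤ α|s| + β for all (x,ξ) ∈ K and all s ∈ ℝ. Then every finite positive Radon measure μ on ℝ^d × ℝ^d that is invariant under Φ_s (i.e., (Φ_s)_*μ = μ for all s) is supported on the set of stationary points of Φ. -/

import Mathlib

open MeasureTheory Function

/-!
The stationary points form a closed set, so by inner regularity it suffices to show that every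
compact set `K` of non-stationary points is `μ`-null. Flowing `K` for the times `n c / α` with
`c = 2β + 1` carries it into the shells `n c - β ≤ ‖p‖ ≤ n c + β`, which are pairwise disjoint.
By invariance each shell has measure at least `μ K`, and a finite measure cannot contain
infinitely many disjoint sets of the same positive measure.
-/

theorem isClosed_setOf_forall_eq_self {ι X : Type*} [TopologicalSpace X] [T2Space X]
    {f : ι → X → X} (hf : ∀ i, Continuous (f i)) : IsClosed {x | ∀ i, f i x = x} := by
  simp only [Set.ofPred_forall]
  exact isClosed_iInter fun i => isClosed_eq (hf i) continuous_id

theorem pairwise_disjoint_Icc_natCast_mul {β c : ℝ} (hc : 2 * β < c) :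
    Pairwise (Disjoint on fun n : ℕ => Set.Icc (n * c - β) (n * c + β)) := by
  intro m n hmn
  wlog hlt : m < n generalizing m n
  · exact (this hmn.symm (hmn.lt_or_gt.resolve_left hlt)).symm
  rw [onFun, Set.disjoint_left]
  rintro x ⟨hxm, hxm'⟩ ⟨hxn, -⟩
  have hmn' : (m : ℝ) + 1 ≤ n := by exact_mod_cast hlt
  nlinarith [mul_le_mul_of_nonneg_left hmn' (by linarith : (0 : ℝ) ≤ c)]

theorem measure_eq_zero_of_le_of_pairwise_disjoint {α : Type*} [MeasurableSpace α]
    {μ : Measure α} [IsFiniteMeasure μ] {s : Set α} {A : ℕ → Set α}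
    (hA : ∀ n, MeasurableSet (A n)) (hd : Pairwise (Disjoint on A)) (hle : ∀ n, μ s ≤ μ (A n)) :
    μ s = 0 := by
  by_contra hs
  have hsum : ∑' _ : ℕ, μ s ≤ μ (⋃ n, A n) :=
    (ENNReal.tsum_le_tsum hle).trans (tsum_meas_le_meas_iUnion_of_disjoint μ hA hd)
  rw [ENNReal.tsum_const_eq_top_of_ne_zero hs, top_le_iff] at hsum
  exact measure_ne_top μ _ hsum

theorem measure_eq_zero_of_linear_escape {E : Type*} [NormedAddCommGroup E] [MeasurableSpace E]
    [OpensMeasurableSpace E] {Φ : ℝ → E → E} (hΦ : ∀ s, Measurable (Φ s))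
    {μ : Measure E} [IsFiniteMeasure μ] (hinv : ∀ s, μ.map (Φ s) = μ) {K : Set E} {α β : ℝ}
    (hα : 0 < α) (hβ : 0 ≤ β)
    (hK : ∀ p ∈ K, ∀ s, α * |s| - β ≤ ‖Φ s p‖ ∧ ‖Φ s p‖ ≤ α * |s| + β) :
    μ K = 0 := by
  set c := 2 * β + 1
  set shell : ℕ → Set E := fun n => norm ⁻¹' Set.Icc (n * c - β) (n * c + β)
  have hshell : ∀ n, MeasurableSet (shell n) := fun n =>
    measurableSet_Icc.preimage measurable_norm
  refine measure_eq_zero_of_le_of_pairwise_disjoint hshell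
    ((pairwise_disjoint_Icc_natCast_mul (by linarith)).mono fun _ _ h => h.preimage _)
    fun n => ?_
  set t := n * c / α
  have hsub : K ⊆ Φ t ⁻¹' shell n := by
    intro p hp
    have ht : α * |t| = n * c := by
      rw [abs_of_nonneg (by positivity)]
      exact mul_div_cancel₀ _ hα.ne'
    have hpt := hK p hp t
    rw [ht] at hpt
    exact hpt
  calc μ K ≤ μ (Φ t ⁻¹' shell n) := measure_mono hsub
    _ = μ.map (Φ t) (shell n) := (Measure.map_apply (hΦ t) (hshell n)).symm
    _ = μ (shell n) := by rw [hinv]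

theorem stmt_0_general {d : ℕ}
    (Φ : ℝ → (EuclideanSpace ℝ (Fin d) × EuclideanSpace ℝ (Fin d)) →
      (EuclideanSpace ℝ (Fin d) × EuclideanSpace ℝ (Fin d)))
    (hcont : ∀ s, Continuous (Φ s))
    (hdisp : ∀ K : Set (EuclideanSpace ℝ (Fin d) × EuclideanSpace ℝ (Fin d)),
      IsCompact K → (∀ p ∈ K, ¬ (∀ s : ℝ, Φ s p = p)) →
      ∃ α > (0:ℝ), ∃ β > (0:ℝ), ∀ p ∈ K, ∀ s : ℝ,
        α * |s| - β ≤ ‖Φ s p‖ ∧ ‖Φ s p‖ ≤ α * |s| + β)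
    (μ : Measure (EuclideanSpace ℝ (Fin d) × EuclideanSpace ℝ (Fin d)))
    [IsFiniteMeasure μ]
    (hinv : ∀ s : ℝ, μ.map (Φ s) = μ) :
    μ {p | ¬ (∀ s : ℝ, Φ s p = p)} = 0 := by
  have hopen : IsOpen {p | ¬ (∀ s : ℝ, Φ s p = p)} :=
    (isClosed_setOf_forall_eq_self hcont).isOpen_compl
  rw [hopen.measure_eq_iSup_isCompact]
  simp only [ENNReal.iSup_eq_zero]
  intro K hKN hK
  obtain ⟨α, hα, β, hβ, hesc⟩ := hdisp K hK hKN
  exact measure_eq_zero_of_linear_escape (fun s => (hcont s).measurable) hinv hα hβ.le hesc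

/-- A flow on `ℝ^d × ℝ^d` whose non-stationary compact sets travel to
infinity at uniform linear speed has all its finite invariant measures supported
on the set of stationary points. -/
theorem stmt_0 {d : ℕ}
    (Φ : ℝ → (EuclideanSpace ℝ (Fin d) × EuclideanSpace ℝ (Fin d)) →
      (EuclideanSpace ℝ (Fin d) × EuclideanSpace ℝ (Fin d)))
    (hcont : ∀ s, Continuous (Φ s))
    (hid : Φ 0 = id)
    (hgroup : ∀ s t, Φ (s + t) = Φ s ∘ Φ t)
    (hdisp : ∀ K : Set (EuclideanSpace ℝ (Fin d) × EuclideanSpace ℝ (Fin d)),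
      IsCompact K → (∀ p ∈ K, ¬ (∀ s : ℝ, Φ s p = p)) →
      ∃ α > (0:ℝ), ∃ β > (0:ℝ), ∀ p ∈ K, ∀ s : ℝ,
        α * |s| - β ≤ ‖Φ s p‖ ∧ ‖Φ s p‖ ≤ α * |s| + β)
    (μ : Measure (EuclideanSpace ℝ (Fin d) × EuclideanSpace ℝ (Fin d)))
    [IsFiniteMeasure μ]
    (hinv : ∀ s : ℝ, μ.map (Φ s) = μ) :
    μ {p | ¬ (∀ s : ℝ, Φ s p = p)} = 0 :=
  stmt_0_general Φ hcont hdisp μ hinv
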